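/- arXiv:1703.09136 — 2 statements merged into one kernel-verified Lean document; each statement's English description precedes it below -/
import Mathlib

section
/- Let $u_{\mathbf{x}_0}(\mathbf{x}) = g(\mathbf{x}, \mathbf{x}_0) + g(\mathbf{x}, \mathbf{x}_0^{im}) + \int_0^\infty g(\mathbf{x}, \mathbf{x}_0^{im} - s\hat y)\, 2i\alpha e^{i\alpha s}\, ds$ where $g$ is the free-space 2-D Helmholtz Green's function with wavenumber $k$, $\mathbf{x}_0 = (x_0, y_0)$ with $y_0 > 0$, and $\mathbf{x}_0^{im} = (x_0, -y_0)$. Then for $\mathbf{x} = (x, 0)$ on the interface, $u_{\mathbf{x}_0}$ satisfies the impedance boundary condition $\frac{\partial u_{\mathbf{x}_0}}{\partial y}(x, 0) + i\alpha\, u_{\mathbf{x}_0}(x, 0) = 0$ (in the sense of the analytic continuation of the integral, assuming all integrals converge). -/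
/-!
On the interface the direct and image terms are mirror images of each other in `y`, so their
`y`-derivatives cancel. The integrand depends on `y` only through `y + y₀ + s`, so its
`y`-derivative is its `s`-derivative, and integrating by parts with `μ' = iαμ`, `μ(0) = 2iα`
turns `∂_y` of the integral into `-2iα g(x, x₀ⁱᵐ) - iα ∫ g μ`, which is exactly `-iα u`.
-/

open MeasureTheory Complex Set Filter Topology

lemma deriv_neg_of_even {𝕜 F : Type*} [NontriviallyNormedField 𝕜] [NormedAddCommGroup F]
    [NormedSpace 𝕜 F] {f : 𝕜 → F} (hf : ∀ x, f (-x) = f x) (x : 𝕜) :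
    deriv f (-x) = -deriv f x := by
  conv_lhs => rw [← funext hf]
  rw [deriv_comp_neg, neg_neg]

lemma hasDerivAt_comp_sub_add_comp_add_of_even {𝕜 F : Type*} [NontriviallyNormedField 𝕜]
    [NormedAddCommGroup F] [NormedSpace 𝕜 F] {φ : 𝕜 → F} {b : 𝕜} (heven : ∀ z, φ (-z) = φ z)
    (hb : DifferentiableAt 𝕜 φ b) :
    HasDerivAt (fun y => φ (y - b) + φ (y + b)) 0 0 := by
  have hb' : DifferentiableAt 𝕜 φ (0 - b) := by
    rwa [zero_sub, ← differentiableAt_comp_neg, funext heven]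
  have h := (hb'.hasDerivAt.comp_sub_const 0 b).add
    ((zero_add b ▸ hb).hasDerivAt.comp_add_const 0 b)
  rwa [zero_sub, deriv_neg_of_even heven, zero_add, neg_add_cancel] at h

/-- With `A = (x - x₀)²`, the radial function `f ‖(x, y) - (x₀, b)‖` is
`verticalProfile f A (y - b)`. -/
noncomputable def verticalProfile {E : Type*} (f : ℝ → E) (A z : ℝ) : E := f (√(A + z ^ 2))

lemma verticalProfile_neg {E : Type*} (f : ℝ → E) (A z : ℝ) :
    verticalProfile f A (-z) = verticalProfile f A z := by
  simp [verticalProfile]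

lemma differentiableAt_verticalProfile {E : Type*} [NormedAddCommGroup E] [NormedSpace ℝ E]
    {f : ℝ → E} {A z : ℝ} (hf : ∀ r, 0 < r → DifferentiableAt ℝ f r) (hA : 0 ≤ A) (hz : z ≠ 0) :
    DifferentiableAt ℝ (verticalProfile f A) z :=
  have h : 0 < A + z ^ 2 := by positivity
  (hf _ (Real.sqrt_pos.mpr h)).comp z ((differentiableAt_id.pow 2).const_add A |>.sqrt h.ne')

lemma hasDerivAt_const_mul_cexp_mul_ofReal (a c : ℂ) (s : ℝ) :
    HasDerivAt (fun t : ℝ => a * exp (c * t)) (c * (a * exp (c * s))) s := by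
  simpa [mul_comm, mul_left_comm] using
    (((hasDerivAt_id s).ofReal_comp).const_mul c).cexp.const_mul a

lemma integral_Ioi_deriv_mul_of_deriv_eq_const_mul {a : ℝ} {c : ℂ} {G μ : ℝ → ℂ}
    (hG₀ : ContinuousWithinAt G (Ici a) a) (hG : ∀ s ∈ Ioi a, DifferentiableAt ℝ G s)
    (hμ : ∀ s, HasDerivAt μ (c * μ s) s)
    (hint : IntegrableOn (fun s => G s * μ s) (Ioi a))
    (hint' : IntegrableOn (fun s => deriv G s * μ s) (Ioi a))
    (hlim : Tendsto (fun s => G s * μ s) atTop (𝓝 0)) :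
    ∫ s in Ioi a, deriv G s * μ s = -(G a * μ a) - c * ∫ s in Ioi a, G s * μ s := by
  have hprod : ∀ s ∈ Ioi a,
      HasDerivAt (fun t => G t * μ t) (deriv G s * μ s + c * (G s * μ s)) s := fun s hs =>
    ((hG s hs).hasDerivAt.mul (hμ s)).congr_deriv (by ring)
  have hcont : ContinuousWithinAt (fun t => G t * μ t) (Ici a) a :=
    hG₀.mul (hμ a).continuousAt.continuousWithinAt
  have h := integral_Ioi_of_hasDerivAt_of_tendsto hcont hprod
    (hint'.add (hint.const_mul c)) hlim
  rw [integral_add hint' (hint.const_mul c), integral_const_mul] at h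
  linear_combination h

theorem stmt_12_general (α x x0 y0 : ℝ) (hy0 : 0 < y0)
    (f f' : ℝ → ℂ) (hf : ∀ r : ℝ, 0 < r → HasDerivAt f (f' r) r)
    (D : ℝ → ℝ → ℝ)
    (hD : ∀ y b : ℝ, D y b = Real.sqrt ((x - x0) ^ 2 + (y - b) ^ 2))
    (μ : ℝ → ℂ) (hμ : ∀ s : ℝ, μ s = 2 * I * α * Complex.exp (I * α * s))
    (u : ℝ → ℂ)
    (hu : ∀ y : ℝ, u y = f (D y y0) + f (D y (-y0))
        + ∫ s in Set.Ioi (0 : ℝ), f (D y (-y0 - s)) * μ s)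
    (hint : IntegrableOn (fun s : ℝ => f (D 0 (-y0 - s)) * μ s) (Set.Ioi 0))
    (hint' : IntegrableOn
      (fun s : ℝ => deriv (fun s' : ℝ => f (D 0 (-y0 - s'))) s * μ s) (Set.Ioi 0))
    (hdecay : Filter.Tendsto (fun s : ℝ => f (D 0 (-y0 - s)) * μ s)
      Filter.atTop (nhds 0))
    (hDI : HasDerivAt (fun y : ℝ => ∫ s in Set.Ioi (0 : ℝ), f (D y (-y0 - s)) * μ s)
      (∫ s in Set.Ioi (0 : ℝ),
        deriv (fun y : ℝ => f (D y (-y0 - s))) 0 * μ s) 0) :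
    deriv u 0 + I * α * u 0 = 0 := by
  set φ := verticalProfile f ((x - x0) ^ 2)
  have hφ_even : ∀ z, φ (-z) = φ z := verticalProfile_neg f _
  have hfD : ∀ y b, f (D y b) = φ (y - b) := fun y b => by rw [hD]; rfl
  have hφ : ∀ z ≠ 0, DifferentiableAt ℝ φ z := fun z =>
    differentiableAt_verticalProfile (fun r hr => (hf r hr).differentiableAt) (sq_nonneg _)
  set G := fun s : ℝ => f (D 0 (-y0 - s))
  have hG : G = fun s => φ (s + y0) := funext fun s => by simp only [G, hfD]; ring_nf
  have hGd : ∀ s, 0 ≤ s → DifferentiableAt ℝ G s := fun s hs => by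
    rw [hG]; exact differentiableAt_comp_add_const.mpr (hφ _ (by positivity))
  have hderiv_integrand : ∀ s, deriv (fun y => f (D y (-y0 - s))) 0 = deriv G s := fun s => by
    simp only [hfD, hG, sub_eq_add_neg (b := -y0 - s), deriv_comp_add_const]
    congr 1; ring
  have hu' : HasDerivAt u (0 + ∫ s in Ioi 0, deriv G s * μ s) 0 := by
    have hu_eq : u = fun y => (φ (y - y0) + φ (y + y0)) + ∫ s in Ioi 0, f (D y (-y0 - s)) * μ s :=
      funext fun y => by rw [hu, hfD, hfD, sub_neg_eq_add]
    have h := (hasDerivAt_comp_sub_add_comp_add_of_even hφ_even (hφ y0 hy0.ne')).add hDI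
    simp only [hderiv_integrand] at h
    rw [hu_eq]
    exact h
  have hibp : ∫ s in Ioi 0, deriv G s * μ s = -(G 0 * μ 0) - I * α * ∫ s in Ioi 0, G s * μ s :=
    integral_Ioi_deriv_mul_of_deriv_eq_const_mul (hGd 0 le_rfl).continuousAt.continuousWithinAt
      (fun s hs => hGd s hs.le)
      (fun s => by rw [show μ = _ from funext hμ]; exact hasDerivAt_const_mul_cexp_mul_ofReal _ _ s)
      hint hint' hdecay
  have hG0 : G 0 = φ y0 := by simp [hG]
  have hμ0 : μ 0 = 2 * I * α := by simp [hμ]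
  rw [hu'.deriv, hibp, hu 0, hfD, hfD, zero_sub, zero_sub, neg_neg, hφ_even, hG0, hμ0]
  ring

/-- The domain Green's function `u_{x₀}(x) = g(x,x₀) + g(x,x₀ⁱᵐ) +
∫₀^∞ g(x, x₀ⁱᵐ - s ŷ) 2iα e^{iαs} ds` for the half-space impedance problem
satisfies `∂_y u + iα u = 0` on the interface `y = 0`.  Here the free-space
Green's function is radial, `g(x, x') = f(‖x - x'‖)` with
`f(r) = (i/4) H₀⁽¹⁾(k r)`; the function `f` is abstracted as any
differentiable radial profile, and the convergence/decay of all the improper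
integrals, as well as differentiation under the integral sign, are taken as
hypotheses ("assuming all integrals converge"). -/
theorem stmt_12 (k α x x0 y0 : ℝ) (hk : 0 < k) (hα : 0 < α) (hy0 : 0 < y0)
    (f f' : ℝ → ℂ) (hf : ∀ r : ℝ, 0 < r → HasDerivAt f (f' r) r)
    (D : ℝ → ℝ → ℝ)
    (hD : ∀ y b : ℝ, D y b = Real.sqrt ((x - x0) ^ 2 + (y - b) ^ 2))
    (μ : ℝ → ℂ) (hμ : ∀ s : ℝ, μ s = 2 * I * α * Complex.exp (I * α * s))
    (u : ℝ → ℂ)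
    (hu : ∀ y : ℝ, u y = f (D y y0) + f (D y (-y0))
        + ∫ s in Set.Ioi (0 : ℝ), f (D y (-y0 - s)) * μ s)
    (hint : IntegrableOn (fun s : ℝ => f (D 0 (-y0 - s)) * μ s) (Set.Ioi 0))
    (hint' : IntegrableOn
      (fun s : ℝ => deriv (fun s' : ℝ => f (D 0 (-y0 - s'))) s * μ s) (Set.Ioi 0))
    (hdecay : Filter.Tendsto (fun s : ℝ => f (D 0 (-y0 - s)) * μ s)
      Filter.atTop (nhds 0))
    (hDI : HasDerivAt (fun y : ℝ => ∫ s in Set.Ioi (0 : ℝ), f (D y (-y0 - s)) * μ s)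
      (∫ s in Set.Ioi (0 : ℝ),
        deriv (fun y : ℝ => f (D y (-y0 - s))) 0 * μ s) 0) :
    deriv u 0 + I * α * u 0 = 0 :=
  stmt_12_general α x x0 y0 hy0 f f' hf D hD μ hμ u hu hint hint' hdecay hDI
end

section
/- Let $d > 0$ and $k_1, k_2, k_3 > 0$, and fix a real $\lambda$ with $\lambda > \max(k_1, k_2, k_3)$, so $\gamma_j = \sqrt{\lambda^2 - k_j^2} > 0$ for $j = 1,2,3$. Then the $4\times 4$ interface matrix $M(\lambda) = \begin{pmatrix} 1/\gamma_1 & -1/\gamma_2 & -e^{-\gamma_2 d}/\gamma_2 & 0 \\ 0 & e^{-\gamma_2 d}/\gamma_2 & 1/\gamma_2 & -1/\gamma_3 \\ 1 & 1 & -e^{-\gamma_2 d} & 0 \\ 0 & e^{-\gamma_2 d} & -1 & -1 \end{pmatrix}$ is invertible. -/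
/-!
With `E = e^{-γ₂ d}`, cofactor expansion gives
`γ₁ γ₂² γ₃ · det M = (γ₁ + γ₂)(γ₂ + γ₃) + E² (γ₁ - γ₂)(γ₂ - γ₃)`. For positive `γⱼ` we have
`|γ₁ - γ₂| < γ₁ + γ₂` and `|γ₂ - γ₃| < γ₂ + γ₃`, and `E² ≤ 1`, so the second term can never
cancel the first.
-/

section InterfaceMatrix

variable {K : Type*}

def interfaceMatrix [Field K] (g₁ g₂ g₃ E : K) : Matrix (Fin 4) (Fin 4) K :=
  !![1 / g₁, -1 / g₂, -E / g₂, 0;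
    0, E / g₂, 1 / g₂, -1 / g₃;
    1, 1, -E, 0;
    0, E, -1, -1]

theorem det_interfaceMatrix [Field K] {g₁ g₂ g₃ : K} (E : K)
    (h₁ : g₁ ≠ 0) (h₂ : g₂ ≠ 0) (h₃ : g₃ ≠ 0) :
    (interfaceMatrix g₁ g₂ g₃ E).det =
      ((g₁ + g₂) * (g₂ + g₃) + E ^ 2 * (g₁ - g₂) * (g₂ - g₃)) / (g₁ * g₂ ^ 2 * g₃) := by
  simp [interfaceMatrix, Matrix.det_succ_row_zero, Fin.sum_univ_succ, Fin.succAbove]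
  field_simp
  ring

variable [Field K] [LinearOrder K] [IsStrictOrderedRing K]

theorem abs_mul_sub_sub_lt {a b c : K} (ha : 0 < a) (hb : 0 < b) (hc : 0 < c) :
    |(a - b) * (b - c)| < (a + b) * (b + c) := by
  rw [abs_mul]
  exact mul_lt_mul'' (abs_sub_lt_iff.2 ⟨by linarith, by linarith⟩)
    (abs_sub_lt_iff.2 ⟨by linarith, by linarith⟩) (abs_nonneg _) (abs_nonneg _)

theorem det_interfaceMatrix_pos {g₁ g₂ g₃ E : K} (h₁ : 0 < g₁) (h₂ : 0 < g₂) (h₃ : 0 < g₃)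
    (hE : |E| ≤ 1) : 0 < (interfaceMatrix g₁ g₂ g₃ E).det := by
  rw [det_interfaceMatrix E h₁.ne' h₂.ne' h₃.ne']
  refine div_pos ?_ (by positivity)
  set Q := (g₁ - g₂) * (g₂ - g₃)
  have hQ : |Q| < (g₁ + g₂) * (g₂ + g₃) := abs_mul_sub_sub_lt h₁ h₂ h₃
  have hE2 : E ^ 2 ≤ 1 := (sq_le_one_iff_abs_le_one E).2 hE
  have hcross : -|Q| ≤ E ^ 2 * Q :=
    calc -|Q| ≤ -(E ^ 2 * |Q|) := neg_le_neg (mul_le_of_le_one_left (abs_nonneg Q) hE2)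
      _ = E ^ 2 * -|Q| := (mul_neg _ _).symm
      _ ≤ E ^ 2 * Q := mul_le_mul_of_nonneg_left (neg_abs_le Q) (sq_nonneg E)
  linarith

theorem isUnit_interfaceMatrix {g₁ g₂ g₃ E : K} (h₁ : 0 < g₁) (h₂ : 0 < g₂) (h₃ : 0 < g₃)
    (hE : |E| ≤ 1) : IsUnit (interfaceMatrix g₁ g₂ g₃ E) :=
  (Matrix.isUnit_iff_isUnit_det _).2 (det_interfaceMatrix_pos h₁ h₂ h₃ hE).ne'.isUnit

end InterfaceMatrix

theorem Real.sqrt_sq_sub_sq_pos {k x : ℝ} (hk : 0 < k) (hkx : k < x) : 0 < √(x ^ 2 - k ^ 2) :=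
  Real.sqrt_pos.2 (by nlinarith)

theorem stmt_17 (d k1 k2 k3 lam : ℝ) (hd : 0 < d)
    (hk1 : 0 < k1) (hk2 : 0 < k2) (hk3 : 0 < k3)
    (hlam : max k1 (max k2 k3) < lam) :
    IsUnit (Matrix.of
      !![1 / Real.sqrt (lam ^ 2 - k1 ^ 2), -1 / Real.sqrt (lam ^ 2 - k2 ^ 2),
          -Real.exp (-Real.sqrt (lam ^ 2 - k2 ^ 2) * d) / Real.sqrt (lam ^ 2 - k2 ^ 2), 0;
        0, Real.exp (-Real.sqrt (lam ^ 2 - k2 ^ 2) * d) / Real.sqrt (lam ^ 2 - k2 ^ 2),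
          1 / Real.sqrt (lam ^ 2 - k2 ^ 2), -1 / Real.sqrt (lam ^ 2 - k3 ^ 2);
        1, 1, -Real.exp (-Real.sqrt (lam ^ 2 - k2 ^ 2) * d), 0;
        0, Real.exp (-Real.sqrt (lam ^ 2 - k2 ^ 2) * d), -1, -1]) := by
  obtain ⟨h1, h23⟩ := max_lt_iff.1 hlam
  obtain ⟨h2, h3⟩ := max_lt_iff.1 h23
  have hγ₂ := Real.sqrt_sq_sub_sq_pos hk2 h2
  have hE : |Real.exp (-Real.sqrt (lam ^ 2 - k2 ^ 2) * d)| ≤ 1 := by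
    rw [Real.abs_exp, Real.exp_le_one_iff]
    exact mul_nonpos_of_nonpos_of_nonneg (neg_nonpos.2 hγ₂.le) hd.le
  exact isUnit_interfaceMatrix (Real.sqrt_sq_sub_sq_pos hk1 h1) hγ₂
    (Real.sqrt_sq_sub_sq_pos hk3 h3) hE
end
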